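/- Let g be a metric on U and let V be a smooth vector field on U such that the first-order operator D_V f := Σ_ℓ V^ℓ ∂_ℓ f commutes with the Beltrami–Laplace operator Δ_g, i.e., Δ_g(D_V f) = D_V(Δ_g f) for every smooth f : U → ℝ. Then V is a Killing vector field for g: Σ_s V^s ∂_s g_{ij} + Σ_s g_{sj} ∂_i V^s + Σ_s g_{is} ∂_j V^s = 0 at every point of U and for all indices i, j. -/

import Mathlib

open Matrix

noncomputable section

/-- Partial derivative in the `i`-th coordinate direction of a real-valued function on `ℝⁿ`. -/
def pd {n : ℕ} (i : Fin n) (f : (Fin n → ℝ) → ℝ) : (Fin n → ℝ) → ℝ :=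
  fun x => fderiv ℝ f x (Pi.single i 1)

/-- Iterated partial derivatives along a list of coordinate directions. -/
def iterPD {n : ℕ} : List (Fin n) → ((Fin n → ℝ) → ℝ) → ((Fin n → ℝ) → ℝ)
  | [], f => f
  | i :: l, f => pd i (iterPD l f)

/-- `g` is a (pseudo-Riemannian) metric on `U`: a smooth field of invertible symmetric
real `n×n` matrices. -/
structure IsMetricOn {n : ℕ} (U : Set (Fin n → ℝ))
    (g : (Fin n → ℝ) → Matrix (Fin n) (Fin n) ℝ) : Prop where
  smooth : ∀ i j : Fin n, ContDiffOn ℝ (⊤ : ℕ∞) (fun x => g x i j) U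
  symm : ∀ x ∈ U, (g x).IsSymm
  nondeg : ∀ x ∈ U, IsUnit (g x).det

/-- The Christoffel symbols `Γ^k_{ij}` of the metric `g`. -/
def Gamma {n : ℕ} (g : (Fin n → ℝ) → Matrix (Fin n) (Fin n) ℝ)
    (k i j : Fin n) (x : Fin n → ℝ) : ℝ :=
  (1/2) * ∑ ℓ, (g x)⁻¹ k ℓ *
    (pd i (fun y => g y ℓ j) x + pd j (fun y => g y ℓ i) x - pd ℓ (fun y => g y i j) x)

/-- An open interval of `ℝ` (possibly empty or unbounded): an open order-connected set. -/
def IsOpenInterval (I : Set ℝ) : Prop := IsOpen I ∧ I.OrdConnected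

/-- `γ` is a `g`-geodesic defined on the open interval `I`, with values in `U`. -/
structure IsGeodesicOn {n : ℕ} (U : Set (Fin n → ℝ))
    (g : (Fin n → ℝ) → Matrix (Fin n) (Fin n) ℝ)
    (γ : ℝ → (Fin n → ℝ)) (I : Set ℝ) : Prop where
  interval : IsOpenInterval I
  smooth : ∀ k : Fin n, ContDiffOn ℝ (⊤ : ℕ∞) (fun s => γ s k) I
  mem : ∀ t ∈ I, γ t ∈ U
  eqn : ∀ t ∈ I, ∀ k : Fin n,
    deriv (deriv fun s => γ s k) t
      + ∑ i, ∑ j, Gamma g k i j (γ t) * deriv (fun s => γ s i) t * deriv (fun s => γ s j) t = 0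

/-- `g` and `gbar` are projectively equivalent on `U`: every `g`-geodesic with nowhere
vanishing velocity becomes, after a smooth reparameterization (a diffeomorphism of open
intervals), a `gbar`-geodesic. -/
def ProjEquiv {n : ℕ} (U : Set (Fin n → ℝ))
    (g gbar : (Fin n → ℝ) → Matrix (Fin n) (Fin n) ℝ) : Prop :=
  ∀ (γ : ℝ → (Fin n → ℝ)) (I : Set ℝ), IsGeodesicOn U g γ I →
    (∀ t ∈ I, ∃ k, deriv (fun s => γ s k) t ≠ 0) →
    ∃ (φ : ℝ → ℝ) (J : Set ℝ), IsOpenInterval J ∧ ContDiffOn ℝ (⊤ : ℕ∞) φ J ∧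
      Set.InjOn φ J ∧ φ '' J = I ∧ (∀ t ∈ J, deriv φ t ≠ 0) ∧
      IsGeodesicOn U gbar (γ ∘ φ) J

/-- The (1,1)-tensor `L = |det gbar / det g|^{1/(n+1)} gbar⁻¹ g` built from `g` and `gbar`. -/
def Lfield {n : ℕ} (g gbar : (Fin n → ℝ) → Matrix (Fin n) (Fin n) ℝ)
    (x : Fin n → ℝ) : Matrix (Fin n) (Fin n) ℝ :=
  |(gbar x).det / (g x).det| ^ ((1 : ℝ)/((n : ℝ)+1)) • ((gbar x)⁻¹ * g x)

/-- The family `S(t) = adjugate (t·Id − L)`. -/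
def Sfield {n : ℕ} (g gbar : (Fin n → ℝ) → Matrix (Fin n) (Fin n) ℝ) (t : ℝ)
    (x : Fin n → ℝ) : Matrix (Fin n) (Fin n) ℝ :=
  (t • (1 : Matrix (Fin n) (Fin n) ℝ) - Lfield g gbar x).adjugate

/-- The second order operator associated (via Carter's quantization) to a field `A` of
symmetric matrices: `Â f = |det g|^{-1/2} ∑ᵢⱼ ∂ᵢ(|det g|^{1/2} Aⁱʲ ∂ⱼ f)`. -/
def assocOp {n : ℕ} (g A : (Fin n → ℝ) → Matrix (Fin n) (Fin n) ℝ)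
    (f : (Fin n → ℝ) → ℝ) (x : Fin n → ℝ) : ℝ :=
  |(g x).det| ^ (-(1 : ℝ)/2) * ∑ i, ∑ j,
    pd i (fun y => |(g y).det| ^ ((1 : ℝ)/2) * A y i j * pd j f y) x

/-- The operator `K̂^{(t)}`, associated to `A = S(t)·g⁻¹`. -/
def Khat {n : ℕ} (g gbar : (Fin n → ℝ) → Matrix (Fin n) (Fin n) ℝ) (t : ℝ)
    (f : (Fin n → ℝ) → ℝ) (x : Fin n → ℝ) : ℝ :=
  assocOp g (fun y => Sfield g gbar t y * (g y)⁻¹) f x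

/-- The Beltrami-Laplace operator of `g`, associated to `A = g⁻¹`. -/
def LaplaceOp {n : ℕ} (g : (Fin n → ℝ) → Matrix (Fin n) (Fin n) ℝ)
    (f : (Fin n → ℝ) → ℝ) (x : Fin n → ℝ) : ℝ :=
  assocOp g (fun y => (g y)⁻¹) f x

/-- `K` is a Killing tensor for `g` on `U`: the associated quadratic function is constant
along every `g`-geodesic. -/
def IsKillingTensorOn {n : ℕ} (U : Set (Fin n → ℝ))
    (g K : (Fin n → ℝ) → Matrix (Fin n) (Fin n) ℝ) : Prop :=
  ∀ (γ : ℝ → (Fin n → ℝ)) (I : Set ℝ), IsGeodesicOn U g γ I →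
    ∀ τ₁ ∈ I, ∀ τ₂ ∈ I,
      (∑ i, ∑ j, deriv (fun s => γ s i) τ₁ * K (γ τ₁) i j * deriv (fun s => γ s j) τ₁) =
      (∑ i, ∑ j, deriv (fun s => γ s i) τ₂ * K (γ τ₂) i j * deriv (fun s => γ s j) τ₂)

/-- The covariant derivative `∇_k T_{ij}` of a (0,2)-tensor field `T`. -/
def covDeriv2 {n : ℕ} (g T : (Fin n → ℝ) → Matrix (Fin n) (Fin n) ℝ)
    (k i j : Fin n) (x : Fin n → ℝ) : ℝ :=
  pd k (fun y => T y i j) x - (∑ s, Gamma g s k i x * T x s j)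
    - ∑ s, Gamma g s k j x * T x i s

/-- The Ricci curvature tensor `R_{ij}` of `g`. -/
def Ricci {n : ℕ} (g : (Fin n → ℝ) → Matrix (Fin n) (Fin n) ℝ)
    (i j : Fin n) (x : Fin n → ℝ) : ℝ :=
  (∑ ℓ, pd ℓ (fun y => Gamma g ℓ i j y) x) - (∑ ℓ, pd i (fun y => Gamma g ℓ ℓ j y) x)
    + ∑ ℓ, ∑ s, (Gamma g ℓ ℓ s x * Gamma g s i j x - Gamma g ℓ i s x * Gamma g s ℓ j x)

/-- A function vanishes up to order `k` at `p`: it and all its partial derivatives of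
order `≤ k` vanish at `p`. -/
def VanishUpTo {n : ℕ} (k : ℕ) (f : (Fin n → ℝ) → ℝ) (p : Fin n → ℝ) : Prop :=
  ∀ l : List (Fin n), l.length ≤ k → iterPD l f p = 0


/-- The plain (flat) second order operator `Â f = ∑ᵢⱼ ∂ᵢ(Aⁱʲ ∂ⱼ f)` associated to a
matrix field `A`. -/
def opPlain {n : ℕ} (A : (Fin n → ℝ) → Matrix (Fin n) (Fin n) ℝ)
    (f : (Fin n → ℝ) → ℝ) (x : Fin n → ℝ) : ℝ :=
  ∑ i, ∑ j, pd i (fun y => A y i j * pd j f y) x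

end

/-!
Test the commutation at `x` on the quadratic `f = (y_i - x_i)(y_j - x_j)`. Expanding both
sides with the Leibniz rule `Δ(uv) = uΔv + vΔu + 2⟨du, dv⟩_g`, everything cancels except
`V(g^{ij}) = g^{aj} ∂_a V^i + g^{ia} ∂_a V^j`: the Lie derivative of the inverse metric along
`V` vanishes at `x`. Differentiating `g g⁻¹ = 1` along `V` turns this into the Killing equation
for `g`.
-/

open Filter
open scoped ContDiff Topology

section

variable {n : ℕ}

section PartialDerivative

variable {i : Fin n} {u v : (Fin n → ℝ) → ℝ} {x : Fin n → ℝ}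

lemma pd_congr_of_eventuallyEq (h : u =ᶠ[𝓝 x] v) : pd i u x = pd i v x := by
  simp only [pd, h.fderiv_eq]

lemma pd_const (c : ℝ) : pd i (fun _ => c) x = 0 := by
  simp [pd]

lemma pd_add (hu : DifferentiableAt ℝ u x) (hv : DifferentiableAt ℝ v x) :
    pd i (fun y => u y + v y) x = pd i u x + pd i v x := by
  simp [pd, fderiv_fun_add hu hv]

lemma pd_mul (hu : DifferentiableAt ℝ u x) (hv : DifferentiableAt ℝ v x) :
    pd i (fun y => u y * v y) x = pd i u x * v x + u x * pd i v x := by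
  simp [pd, fderiv_fun_mul hu hv]
  ring

lemma pd_sum {ι : Type*} {s : Finset ι} {F : ι → (Fin n → ℝ) → ℝ}
    (h : ∀ a ∈ s, DifferentiableAt ℝ (F a) x) :
    pd i (fun y => ∑ a ∈ s, F a y) x = ∑ a ∈ s, pd i (F a) x := by
  simp [pd, fderiv_fun_sum h]

lemma pd_apply_sub_const (k : Fin n) (c : ℝ) :
    pd i (fun y => y k - c) x = if k = i then 1 else 0 := by
  rw [pd, fderiv_sub_const, fderiv_apply differentiableAt_fun_id, fderiv_fun_id]
  simp [Pi.single_apply]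

lemma contDiffAt_pd {k m : WithTop ℕ∞} (h : ContDiffAt ℝ k u x) (hmk : m + 1 ≤ k) :
    ContDiffAt ℝ m (pd i u) x :=
  (h.fderiv_right hmk).clm_apply contDiffAt_const

lemma ContDiffAt.eventually_differentiableAt (hu : ContDiffAt ℝ 2 u x) :
    ∀ᶠ y in 𝓝 x, DifferentiableAt ℝ u y :=
  (hu.eventually (by decide)).mono fun _ hy => hy.differentiableAt two_ne_zero

lemma ContDiffAt.differentiableAt_pd {i : Fin n} (hu : ContDiffAt ℝ 2 u x) :
    DifferentiableAt ℝ (pd i u) x :=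
  (contDiffAt_pd (m := 1) hu (by norm_num)).differentiableAt one_ne_zero

end PartialDerivative

section MatrixSmoothness

variable {E : Type*} [NormedAddCommGroup E] [NormedSpace ℝ E] {ι : Type*} [Fintype ι]
  [DecidableEq ι] {m : WithTop ℕ∞} {G : E → Matrix ι ι ℝ} {x : E}

lemma contDiffAt_det (h : ∀ i j, ContDiffAt ℝ m (fun y => G y i j) x) :
    ContDiffAt ℝ m (fun y => (G y).det) x := by
  simp only [Matrix.det_apply, Units.smul_def, zsmul_eq_mul]
  exact ContDiffAt.sum fun σ _ => contDiffAt_const.mul (contDiffAt_prod fun k _ => h (σ k) k)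

lemma contDiffAt_adjugate_apply (h : ∀ i j, ContDiffAt ℝ m (fun y => G y i j) x) (a b : ι) :
    ContDiffAt ℝ m (fun y => (G y).adjugate a b) x := by
  simp only [Matrix.adjugate_apply]
  refine contDiffAt_det fun p q => ?_
  by_cases hp : p = b
  · simpa [Matrix.updateRow_apply, hp] using contDiffAt_const
  · simpa [Matrix.updateRow_apply, hp] using h p q

lemma contDiffAt_inv_apply (h : ∀ i j, ContDiffAt ℝ m (fun y => G y i j) x)
    (hdet : (G x).det ≠ 0) (a b : ι) :
    ContDiffAt ℝ m (fun y => (G y)⁻¹ a b) x := by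
  simp only [Matrix.inv_def, Ring.inverse_eq_inv', Matrix.smul_apply, smul_eq_mul]
  exact ((contDiffAt_det h).inv hdet).mul (contDiffAt_adjugate_apply h a b)

end MatrixSmoothness

section SecondOrderOperator

variable {g A : (Fin n → ℝ) → Matrix (Fin n) (Fin n) ℝ} {u v : (Fin n → ℝ) → ℝ}
  {x : Fin n → ℝ}

noncomputable def carreDuChamp (A : (Fin n → ℝ) → Matrix (Fin n) (Fin n) ℝ)
    (u v : (Fin n → ℝ) → ℝ) (x : Fin n → ℝ) : ℝ :=
  ∑ a, ∑ b, A x a b * pd a u x * pd b v x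

lemma rpow_neg_half_mul_rpow_half_abs {d : ℝ} (hd : d ≠ 0) :
    |d| ^ (-(1 : ℝ) / 2) * |d| ^ ((1 : ℝ) / 2) = 1 := by
  rw [← Real.rpow_add (abs_pos.mpr hd)]
  norm_num

lemma assocOp_add
    (hA : ∀ a b, DifferentiableAt ℝ (fun y => |(g y).det| ^ ((1 : ℝ) / 2) * A y a b) x)
    (hu : ContDiffAt ℝ 2 u x) (hv : ContDiffAt ℝ 2 v x) :
    assocOp g A (fun y => u y + v y) x = assocOp g A u x + assocOp g A v x := by
  simp only [assocOp, ← mul_add, ← Finset.sum_add_distrib]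
  congr 1
  refine Finset.sum_congr rfl fun a _ => Finset.sum_congr rfl fun b _ => ?_
  have hpd : (fun y => |(g y).det| ^ ((1 : ℝ) / 2) * A y a b * pd b (fun y => u y + v y) y)
      =ᶠ[𝓝 x] fun y => |(g y).det| ^ ((1 : ℝ) / 2) * A y a b * pd b u y
        + |(g y).det| ^ ((1 : ℝ) / 2) * A y a b * pd b v y := by
    filter_upwards [hu.eventually_differentiableAt, hv.eventually_differentiableAt]
      with y hu' hv'
    rw [pd_add hu' hv', mul_add]
  rw [pd_congr_of_eventuallyEq hpd,
    pd_add ((hA a b).fun_mul hu.differentiableAt_pd) ((hA a b).fun_mul hv.differentiableAt_pd)]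

lemma assocOp_mul (hdet : (g x).det ≠ 0)
    (hA : ∀ a b, DifferentiableAt ℝ (fun y => |(g y).det| ^ ((1 : ℝ) / 2) * A y a b) x)
    (hu : ContDiffAt ℝ 2 u x) (hv : ContDiffAt ℝ 2 v x) :
    assocOp g A (fun y => u y * v y) x = u x * assocOp g A v x + v x * assocOp g A u x
      + carreDuChamp A u v x + carreDuChamp A v u x := by
  have hterm : ∀ a b,
      pd a (fun y => |(g y).det| ^ ((1 : ℝ) / 2) * A y a b * pd b (fun y => u y * v y) y) x
        = v x * pd a (fun y => |(g y).det| ^ ((1 : ℝ) / 2) * A y a b * pd b u y) x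
          + u x * pd a (fun y => |(g y).det| ^ ((1 : ℝ) / 2) * A y a b * pd b v y) x
          + |(g x).det| ^ ((1 : ℝ) / 2)
            * (A x a b * pd a u x * pd b v x + A x a b * pd a v x * pd b u x) := by
    intro a b
    have hPu := (hA a b).fun_mul (hu.differentiableAt_pd (i := b))
    have hPv := (hA a b).fun_mul (hv.differentiableAt_pd (i := b))
    have hpd : (fun y => |(g y).det| ^ ((1 : ℝ) / 2) * A y a b * pd b (fun y => u y * v y) y)
        =ᶠ[𝓝 x] fun y => v y * (|(g y).det| ^ ((1 : ℝ) / 2) * A y a b * pd b u y)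
          + u y * (|(g y).det| ^ ((1 : ℝ) / 2) * A y a b * pd b v y) := by
      filter_upwards [hu.eventually_differentiableAt, hv.eventually_differentiableAt]
        with y hu' hv'
      rw [pd_mul hu' hv']
      ring
    have hu' := hu.differentiableAt two_ne_zero
    have hv' := hv.differentiableAt two_ne_zero
    rw [pd_congr_of_eventuallyEq hpd, pd_add (hv'.fun_mul hPu) (hu'.fun_mul hPv), pd_mul hv' hPu,
      pd_mul hu' hPv]
    ring
  simp only [assocOp, carreDuChamp, hterm, Finset.sum_add_distrib, ← Finset.mul_sum]
  linear_combination (∑ a, ∑ b, A x a b * pd a u x * pd b v x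
    + ∑ a, ∑ b, A x a b * pd a v x * pd b u x) * rpow_neg_half_mul_rpow_half_abs hdet

lemma carreDuChamp_sub_const_right (k : Fin n) (c : ℝ) :
    carreDuChamp A u (fun y => y k - c) x = ∑ a, A x a k * pd a u x := by
  simp [carreDuChamp, pd_apply_sub_const]

lemma carreDuChamp_sub_const_left (k : Fin n) (c : ℝ) :
    carreDuChamp A (fun y => y k - c) v x = ∑ b, A x k b * pd b v x := by
  simp [carreDuChamp, pd_apply_sub_const]

lemma contDiffAt_assocOp (hg : ∀ i j, ContDiffAt ℝ ∞ (fun y => g y i j) x)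
    (hdet : (g x).det ≠ 0) (hA : ∀ i j, ContDiffAt ℝ ∞ (fun y => A y i j) x)
    (hu : ContDiffAt ℝ ∞ u x) :
    ContDiffAt ℝ ∞ (assocOp g A u) x := by
  have habs := (contDiffAt_det hg).abs hdet
  have hpow : ∀ p : ℝ, ContDiffAt ℝ ∞ (fun y => |(g y).det| ^ p) x :=
    fun p => habs.rpow_const_of_ne (abs_ne_zero.mpr hdet)
  unfold assocOp
  refine (hpow _).mul (ContDiffAt.sum fun i _ => ContDiffAt.sum fun j _ =>
    contDiffAt_pd (k := ∞) ?_ (by simp))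
  exact ((hpow _).mul (hA i j)).mul (contDiffAt_pd hu (by simp))

end SecondOrderOperator

section DirectionalDerivative

variable {V : (Fin n → ℝ) → Fin n → ℝ} {u v : (Fin n → ℝ) → ℝ} {x : Fin n → ℝ}

noncomputable def vecDeriv (V : (Fin n → ℝ) → Fin n → ℝ) (f : (Fin n → ℝ) → ℝ) :
    (Fin n → ℝ) → ℝ :=
  fun y => ∑ ℓ, V y ℓ * pd ℓ f y

lemma vecDeriv_congr_of_eventuallyEq (h : u =ᶠ[𝓝 x] v) : vecDeriv V u x = vecDeriv V v x := by
  simp only [vecDeriv, pd_congr_of_eventuallyEq h]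

lemma vecDeriv_const (c : ℝ) : vecDeriv V (fun _ => c) x = 0 := by
  simp [vecDeriv, pd_const]

lemma vecDeriv_add (hu : DifferentiableAt ℝ u x) (hv : DifferentiableAt ℝ v x) :
    vecDeriv V (fun y => u y + v y) x = vecDeriv V u x + vecDeriv V v x := by
  simp only [vecDeriv, pd_add hu hv, mul_add, Finset.sum_add_distrib]

lemma vecDeriv_mul (hu : DifferentiableAt ℝ u x) (hv : DifferentiableAt ℝ v x) :
    vecDeriv V (fun y => u y * v y) x = vecDeriv V u x * v x + u x * vecDeriv V v x := by
  simp only [vecDeriv, pd_mul hu hv, Finset.sum_mul, Finset.mul_sum, ← Finset.sum_add_distrib]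
  exact Finset.sum_congr rfl fun _ _ => by ring

lemma vecDeriv_sum {ι : Type*} {s : Finset ι} {F : ι → (Fin n → ℝ) → ℝ}
    (h : ∀ a ∈ s, DifferentiableAt ℝ (F a) x) :
    vecDeriv V (fun y => ∑ a ∈ s, F a y) x = ∑ a ∈ s, vecDeriv V (F a) x := by
  simp only [vecDeriv, pd_sum h, Finset.mul_sum]
  exact Finset.sum_comm

lemma vecDeriv_apply_sub_const (k : Fin n) (c : ℝ) :
    vecDeriv V (fun y => y k - c) x = V x k := by
  simp [vecDeriv, pd_apply_sub_const]

noncomputable def vecDerivMatrix (V : (Fin n → ℝ) → Fin n → ℝ)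
    (G : (Fin n → ℝ) → Matrix (Fin n) (Fin n) ℝ) (x : Fin n → ℝ) : Matrix (Fin n) (Fin n) ℝ :=
  Matrix.of fun p q => vecDeriv V (fun y => G y p q) x

lemma vecDerivMatrix_mul_add_mul_eq_zero {G A : (Fin n → ℝ) → Matrix (Fin n) (Fin n) ℝ}
    (hG : ∀ p q, DifferentiableAt ℝ (fun y => G y p q) x)
    (hA : ∀ p q, DifferentiableAt ℝ (fun y => A y p q) x) (hGA : ∀ᶠ y in 𝓝 x, G y * A y = 1) :
    vecDerivMatrix V G x * A x + G x * vecDerivMatrix V A x = 0 := by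
  ext p q
  have hconst : (fun y => ∑ s, G y p s * A y s q)
      =ᶠ[𝓝 x] fun _ => (1 : Matrix (Fin n) (Fin n) ℝ) p q :=
    hGA.mono fun y hy => by simp only [← Matrix.mul_apply, hy]
  have h := vecDeriv_congr_of_eventuallyEq (V := V) hconst
  rw [vecDeriv_const, vecDeriv_sum fun s _ => (hG p s).fun_mul (hA s q)] at h
  simp only [vecDeriv_mul (hG _ _) (hA _ _), Finset.sum_add_distrib] at h
  simpa [vecDerivMatrix, Matrix.mul_apply] using h

end DirectionalDerivative

namespace IsMetricOn

variable {U : Set (Fin n → ℝ)} {g : (Fin n → ℝ) → Matrix (Fin n) (Fin n) ℝ}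
  {u : (Fin n → ℝ) → ℝ} {x : Fin n → ℝ}

lemma inv_apply_comm (hg : IsMetricOn U g) (hx : x ∈ U) (a b : Fin n) :
    (g x)⁻¹ a b = (g x)⁻¹ b a :=
  (hg.symm x hx).inv.apply b a

lemma contDiffAt_apply (hg : IsMetricOn U g) (hU : IsOpen U) (hx : x ∈ U) (a b : Fin n) :
    ContDiffAt ℝ ∞ (fun y => g y a b) x :=
  (hg.smooth a b).contDiffAt (hU.mem_nhds hx)

lemma contDiffAt_inv_apply (hg : IsMetricOn U g) (hU : IsOpen U) (hx : x ∈ U) (a b : Fin n) :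
    ContDiffAt ℝ ∞ (fun y => (g y)⁻¹ a b) x :=
  _root_.contDiffAt_inv_apply (hg.contDiffAt_apply hU hx) (hg.nondeg x hx).ne_zero a b

lemma differentiableAt_sqrt_det_mul_inv_apply (hg : IsMetricOn U g) (hU : IsOpen U)
    (hx : x ∈ U) (a b : Fin n) :
    DifferentiableAt ℝ (fun y => |(g y).det| ^ ((1 : ℝ) / 2) * (g y)⁻¹ a b) x := by
  have hdet := (hg.nondeg x hx).ne_zero
  refine ((((contDiffAt_det (hg.contDiffAt_apply hU hx)).abs hdet).rpow_const_of_ne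
    (abs_ne_zero.mpr hdet)).mul (hg.contDiffAt_inv_apply hU hx a b)).differentiableAt ?_
  simp

lemma contDiffAt_laplaceOp (hg : IsMetricOn U g) (hU : IsOpen U) (hx : x ∈ U)
    (hu : ContDiffAt ℝ ∞ u x) : ContDiffAt ℝ ∞ (LaplaceOp g u) x :=
  contDiffAt_assocOp (hg.contDiffAt_apply hU hx) (hg.nondeg x hx).ne_zero
    (hg.contDiffAt_inv_apply hU hx) hu

lemma laplaceOp_add (hg : IsMetricOn U g) (hU : IsOpen U) (hx : x ∈ U) {v : (Fin n → ℝ) → ℝ}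
    (hu : ContDiffAt ℝ 2 u x) (hv : ContDiffAt ℝ 2 v x) :
    LaplaceOp g (fun y => u y + v y) x = LaplaceOp g u x + LaplaceOp g v x :=
  assocOp_add (hg.differentiableAt_sqrt_det_mul_inv_apply hU hx) hu hv

lemma laplaceOp_mul_sub_const (hg : IsMetricOn U g) (hU : IsOpen U) (hx : x ∈ U)
    (hu : ContDiffAt ℝ 2 u x) (k : Fin n) (c : ℝ) :
    LaplaceOp g (fun y => u y * (y k - c)) x = u x * LaplaceOp g (fun y => y k - c) x
      + (x k - c) * LaplaceOp g u x + 2 * ∑ a, (g x)⁻¹ a k * pd a u x := by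
  rw [LaplaceOp, assocOp_mul (hg.nondeg x hx).ne_zero
    (hg.differentiableAt_sqrt_det_mul_inv_apply hU hx) hu
    ((contDiff_apply ℝ ℝ k).sub contDiff_const).contDiffAt,
    carreDuChamp_sub_const_right, carreDuChamp_sub_const_left]
  simp only [hg.inv_apply_comm hx k, LaplaceOp]
  ring

end IsMetricOn

noncomputable def jacobian (V : (Fin n → ℝ) → Fin n → ℝ) (x : Fin n → ℝ) :
    Matrix (Fin n) (Fin n) ℝ :=
  Matrix.of fun s a => pd a (fun y => V y s) x

theorem IsMetricOn.jacobian_mul_inv_add_inv_mul_transpose {U : Set (Fin n → ℝ)}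
    {g : (Fin n → ℝ) → Matrix (Fin n) (Fin n) ℝ} {V : (Fin n → ℝ) → Fin n → ℝ} {x : Fin n → ℝ}
    (hg : IsMetricOn U g) (hU : IsOpen U) (hx : x ∈ U)
    (hV : ∀ ℓ, ContDiffAt ℝ 2 (fun y => V y ℓ) x)
    (hcomm : ∀ f, ContDiffOn ℝ ∞ f U →
      LaplaceOp g (vecDeriv V f) x = vecDeriv V (LaplaceOp g f) x) :
    jacobian V x * (g x)⁻¹ + (g x)⁻¹ * (jacobian V x)ᵀ
      = vecDerivMatrix V (fun y => (g y)⁻¹) x := by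
  ext i j
  have hφ : ∀ k, ContDiff ℝ ∞ (fun y : Fin n → ℝ => y k - x k) :=
    fun k => (contDiff_apply ℝ ℝ k).sub contDiff_const
  have hφ2 : ∀ k y, ContDiffAt ℝ 2 (fun y : Fin n → ℝ => y k - x k) y :=
    fun k y => ((hφ k).of_le (by decide)).contDiffAt
  have hφd : ∀ k y, DifferentiableAt ℝ (fun y : Fin n → ℝ => y k - x k) y :=
    fun k y => (hφ2 k y).differentiableAt two_ne_zero
  have hΔφd : ∀ k, DifferentiableAt ℝ (LaplaceOp g fun y => y k - x k) x :=
    fun k => (hg.contDiffAt_laplaceOp hU hx (hφ k).contDiffAt).differentiableAt (by simp)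
  have hDf : vecDeriv V (fun y => (y i - x i) * (y j - x j))
      = fun y => V y i * (y j - x j) + V y j * (y i - x i) := by
    funext y
    rw [vecDeriv_mul (hφd i y) (hφd j y), vecDeriv_apply_sub_const, vecDeriv_apply_sub_const]
    ring
  have hlhs : LaplaceOp g (vecDeriv V fun y => (y i - x i) * (y j - x j)) x
      = V x i * LaplaceOp g (fun y => y j - x j) x + V x j * LaplaceOp g (fun y => y i - x i) x
        + 2 * (∑ a, (g x)⁻¹ a j * pd a (fun y => V y i) x
          + ∑ a, (g x)⁻¹ a i * pd a (fun y => V y j) x) := by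
    rw [hDf, hg.laplaceOp_add hU hx ((hV i).mul (hφ2 j x)) ((hV j).mul (hφ2 i x)),
      hg.laplaceOp_mul_sub_const hU hx (hV i), hg.laplaceOp_mul_sub_const hU hx (hV j)]
    ring
  have hΔf : LaplaceOp g (fun y => (y i - x i) * (y j - x j)) =ᶠ[𝓝 x] fun y =>
      (y i - x i) * LaplaceOp g (fun y => y j - x j) y
        + (y j - x j) * LaplaceOp g (fun y => y i - x i) y + 2 * (g y)⁻¹ i j := by
    filter_upwards [hU.mem_nhds hx] with y hy
    rw [hg.laplaceOp_mul_sub_const hU hy (hφ2 i y)]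
    simp [pd_apply_sub_const]
  have hrhs : vecDeriv V (LaplaceOp g fun y => (y i - x i) * (y j - x j)) x
      = V x i * LaplaceOp g (fun y => y j - x j) x + V x j * LaplaceOp g (fun y => y i - x i) x
        + 2 * vecDeriv V (fun y => (g y)⁻¹ i j) x := by
    have hA := (hg.contDiffAt_inv_apply hU hx i j).differentiableAt (by simp)
    rw [vecDeriv_congr_of_eventuallyEq hΔf, vecDeriv_add (((hφd i x).fun_mul (hΔφd j)).fun_add
      ((hφd j x).fun_mul (hΔφd i))) ((differentiableAt_const _).fun_mul hA),
      vecDeriv_add ((hφd i x).fun_mul (hΔφd j)) ((hφd j x).fun_mul (hΔφd i)),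
      vecDeriv_mul (hφd i x) (hΔφd j), vecDeriv_mul (hφd j x) (hΔφd i),
      vecDeriv_mul (differentiableAt_const _) hA, vecDeriv_const, vecDeriv_apply_sub_const,
      vecDeriv_apply_sub_const]
    ring
  have h := hcomm _ ((hφ i).mul (hφ j)).contDiffOn
  rw [hlhs, hrhs] at h
  simp only [jacobian, vecDerivMatrix, Matrix.add_apply, Matrix.mul_apply, Matrix.of_apply,
    Matrix.transpose_apply, hg.inv_apply_comm hx i, mul_comm (pd _ _ x)]
  linear_combination h / 2

/-- `J` is the Jacobian of a vector field, `G'` and `A'` are the derivatives of `G` and of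
`A = G⁻¹` along it: if the Lie derivative of `A` vanishes, so does that of `G`. -/
theorem killing_of_inverse_killing {R ι : Type*} [Ring R] [Fintype ι] [DecidableEq ι]
    {G A J G' A' : Matrix ι ι R} (hGA : G * A = 1) (hAG : A * G = 1)
    (hder : G' * A + G * A' = 0) (hinv : J * A + A * Jᵀ = A') :
    G' + Jᵀ * G + G * J = 0 := by
  have hG' : G' = -(G * J + Jᵀ * G) := calc
    G' = G' * A * G := by rw [Matrix.mul_assoc, hAG, Matrix.mul_one]
    _ = -(G * A' * G) := by
      rw [eq_neg_of_add_eq_zero_left hder, Matrix.neg_mul, Matrix.mul_assoc]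
    _ = -(G * J * (A * G) + (G * A) * Jᵀ * G) := by rw [← hinv]; noncomm_ring
    _ = -(G * J + Jᵀ * G) := by rw [hAG, hGA, Matrix.mul_one, Matrix.one_mul]
  rw [hG']
  abel

end

theorem first_order_Laplace_commuter_is_Killing_vector_general {n : ℕ} (U : Set (Fin n → ℝ)) (hUo : IsOpen U)
    (g : (Fin n → ℝ) → Matrix (Fin n) (Fin n) ℝ) (hg : IsMetricOn U g)
    (V : (Fin n → ℝ) → Fin n → ℝ)
    (hVs : ∀ ℓ : Fin n, ContDiffOn ℝ (⊤ : ℕ∞) (fun x => V x ℓ) U)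
    (hcomm : ∀ f : (Fin n → ℝ) → ℝ, ContDiffOn ℝ (⊤ : ℕ∞) f U → ∀ x ∈ U,
      LaplaceOp g (fun y => ∑ ℓ, V y ℓ * pd ℓ f y) x =
        ∑ ℓ, V x ℓ * pd ℓ (LaplaceOp g f) x) :
    ∀ x ∈ U, ∀ i j : Fin n,
      (∑ s, V x s * pd s (fun y => g y i j) x) +
        (∑ s, g x s j * pd i (fun y => V y s) x) +
        (∑ s, g x i s * pd j (fun y => V y s) x) = 0 := by
  intro x hx i j
  have hGx := hg.nondeg x hx
  have hkilling := killing_of_inverse_killing (Matrix.mul_nonsing_inv _ hGx)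
    (Matrix.nonsing_inv_mul _ hGx)
    (vecDerivMatrix_mul_add_mul_eq_zero (V := V)
      (fun p q => (hg.contDiffAt_apply hUo hx p q).differentiableAt (by simp))
      (fun p q => (hg.contDiffAt_inv_apply hUo hx p q).differentiableAt (by simp))
      (eventually_of_mem (hUo.mem_nhds hx) fun y hy =>
        Matrix.mul_nonsing_inv _ (hg.nondeg y hy)))
    (hg.jacobian_mul_inv_add_inv_mul_transpose hUo hx
      (fun ℓ => ((hVs ℓ).contDiffAt (hUo.mem_nhds hx)).of_le (by decide))
      (fun f hf => hcomm f hf x hx))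
  simpa [jacobian, vecDerivMatrix, vecDeriv, Matrix.mul_apply, mul_comm] using
    congrFun (congrFun hkilling i) j

theorem first_order_Laplace_commuter_is_Killing_vector {n : ℕ} (hn : 2 ≤ n) (U : Set (Fin n → ℝ)) (hUo : IsOpen U) (hUc : IsConnected U)
    (g : (Fin n → ℝ) → Matrix (Fin n) (Fin n) ℝ) (hg : IsMetricOn U g)
    (V : (Fin n → ℝ) → Fin n → ℝ)
    (hVs : ∀ ℓ : Fin n, ContDiffOn ℝ (⊤ : ℕ∞) (fun x => V x ℓ) U)
    (hcomm : ∀ f : (Fin n → ℝ) → ℝ, ContDiffOn ℝ (⊤ : ℕ∞) f U → ∀ x ∈ U,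
      LaplaceOp g (fun y => ∑ ℓ, V y ℓ * pd ℓ f y) x =
        ∑ ℓ, V x ℓ * pd ℓ (LaplaceOp g f) x) :
    ∀ x ∈ U, ∀ i j : Fin n,
      (∑ s, V x s * pd s (fun y => g y i j) x) +
        (∑ s, g x s j * pd i (fun y => V y s) x) +
        (∑ s, g x i s * pd j (fun y => V y s) x) = 0 :=
  first_order_Laplace_commuter_is_Killing_vector_general U hUo g hg V hVs hcomm
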